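/- Suppose the impurity parameters satisfy the Assumption with constants c > 0, γ ∈ (1,2) and function υ(m). Then there exist constants C, C' > 0, depending only on c and γ, such that for all m ≥ 1 and all annuli A = A_{n1,n2}(z) with z ∈ V and 1 ≤ n1 ≤ n2/2: P̄^{(m)}( H̄̄(A) ) ≤ C·(υ(m)/m²)·n1·n2^{γ−1}·m^{2−γ}·e^{−C'·n2/m}, where H̄̄(A) is the event that some hole H_v intersects both the outer boundary of B_{n1}(z) and the inner boundary of B_{n2}(z), does not contain B_{n1}(z), and does not intersect the inner boundary of B_{2n2}(z). -/

import Mathlib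

open MeasureTheory Set Filter Topology
open scoped ENNReal NNReal BigOperators

noncomputable section

/-! ## The triangular lattice `T` -/

/-- A point of the plane (identified with `ℂ`) belonging to the triangular lattice. -/
def TriPt (z : ℂ) : Prop :=
  ∃ x y : ℤ, z = (x : ℂ) + (y : ℂ) * Complex.exp (Complex.I * ((Real.pi : ℂ) / 3))

/-- The vertex set of the triangular lattice. -/
abbrev TriV : Type := {z : ℂ // TriPt z}

/-- The origin `0` of the lattice. -/
def origin : TriV := ⟨0, ⟨0, 0, by push_cast; ring⟩⟩

/-- Adjacency in the triangular lattice: two vertices at Euclidean distance `1`. -/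
def adj (v w : TriV) : Prop := ‖v.1 - w.1‖ = 1

/-- The box `B_n(z) = z + ([-n,n]² ∩ V)`. -/
def BoxAt (z : TriV) (n : ℝ) : Set TriV :=
  {v | |(v.1 - z.1).re| ≤ n ∧ |(v.1 - z.1).im| ≤ n}

/-- The box `B_n = [-n,n]² ∩ V`. -/
def Box (n : ℝ) : Set TriV := BoxAt origin n

/-- The annulus `A_{n₁,n₂}(z) = B_{n₂}(z) \ B_{n₁}(z)`. -/
def AnnAt (z : TriV) (n₁ n₂ : ℝ) : Set TriV := BoxAt z n₂ \ BoxAt z n₁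

/-- The annulus `A_{n₁,n₂} = B_{n₂} \ B_{n₁}`. -/
def Ann (n₁ n₂ : ℝ) : Set TriV := Box n₂ \ Box n₁

/-- Inner vertex boundary: vertices of `A` with a neighbour outside `A`. -/
def innerBdry (A : Set TriV) : Set TriV := {v | v ∈ A ∧ ∃ w, w ∉ A ∧ adj v w}

/-- Outer vertex boundary: vertices outside `A` with a neighbour in `A`. -/
def outerBdry (A : Set TriV) : Set TriV := {v | v ∉ A ∧ ∃ w ∈ A, adj v w}

/-- There is a lattice path from `v` to `w` all of whose vertices lie in `A`. -/
def ConnIn (A : Set TriV) (v w : TriV) : Prop :=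
  ∃ l : List TriV, l ≠ [] ∧ l.head? = some v ∧ l.getLast? = some w ∧
    l.Chain' adj ∧ ∀ x ∈ l, x ∈ A

/-- The connected component of `v` inside the set `A` (empty if `v ∉ A`). -/
def clusterOf (A : Set TriV) (v : TriV) : Set TriV := {w | ConnIn A v w}

/-! ## Site configurations -/

/-- A site configuration: `true` = occupied, `false` = vacant. -/
abbrev Config : Type := TriV → Bool

/-- The set of occupied vertices of a configuration. -/
def occSet (ω : Config) : Set TriV := {v | ω v = true}

/-- The occupied cluster of a vertex. -/
def occCluster (ω : Config) (v : TriV) : Set TriV := clusterOf (occSet ω) v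

/-- A horizontal crossing of the rectangle `[x₁,x₂] × [y₁,y₂]` inside the set `A`:
a path in `A`, contained in the rectangle, joining a vertex adjacent to (within
distance `1` of) the left side to one adjacent to the right side. -/
def crossSetH (x₁ x₂ y₁ y₂ : ℝ) (A : Set TriV) : Prop :=
  ∃ v w, v.1.re ≤ x₁ + 1 ∧ x₂ - 1 ≤ w.1.re ∧
    ConnIn (A ∩ {u | x₁ ≤ u.1.re ∧ u.1.re ≤ x₂ ∧ y₁ ≤ u.1.im ∧ u.1.im ≤ y₂}) v w

/-- A vertical crossing of the rectangle `[x₁,x₂] × [y₁,y₂]` inside the set `A`. -/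
def crossSetV (x₁ x₂ y₁ y₂ : ℝ) (A : Set TriV) : Prop :=
  ∃ v w, v.1.im ≤ y₁ + 1 ∧ y₂ - 1 ≤ w.1.im ∧
    ConnIn (A ∩ {u | x₁ ≤ u.1.re ∧ u.1.re ≤ x₂ ∧ y₁ ≤ u.1.im ∧ u.1.im ≤ y₂}) v w

/-- An occupied horizontal crossing of `[0,2n] × [0,n]`. -/
def HorizCross (n : ℝ) (ω : Config) : Prop := crossSetH 0 (2 * n) 0 n (occSet ω)

/-- An occupied vertical crossing of `[0,2n] × [0,n]`. -/
def VertCross (n : ℝ) (ω : Config) : Prop := crossSetV 0 (2 * n) 0 n (occSet ω)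

/-! ## Bernoulli site percolation -/

/-- `μ` is Bernoulli site percolation with parameter `p` on the triangular lattice:
a probability measure whose cylinder events have the i.i.d. product probabilities. -/
def IsBernoulli (μ : Measure Config) (p : ℝ) : Prop :=
  IsProbabilityMeasure μ ∧
  ∀ (S : Finset TriV) (f : TriV → Bool),
    μ {ω | ∀ v ∈ S, ω v = f v} =
      ∏ v ∈ S, (if f v then ENNReal.ofReal p else ENNReal.ofReal (1 - p))

/-- The family of Bernoulli site percolation measures `(P_p)_{p ∈ [0,1]}`. -/
structure BernFamily where
  P : ℝ → Measure Config
  bern : ∀ p ∈ Set.Icc (0:ℝ) 1, IsBernoulli (P p) p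

/-- The critical point `p_c = 1/2` of site percolation on the triangular lattice. -/
def pcrit : ℝ := 1 / 2

/-- `θ(p)`: probability that the origin lies in an infinite occupied cluster. -/
def theta (F : BernFamily) (p : ℝ) : ℝ :=
  (F.P p {ω | (occCluster ω origin).Infinite}).toReal

/-- The raw characteristic length for `p < p_c`:
`min {n ≥ 1 : P_p(vertical crossing of [0,2n]×[0,n]) ≤ 0.001}`. -/
def rawLsub (F : BernFamily) (p : ℝ) : ℝ :=
  sInf {x : ℝ | ∃ n : ℕ, x = (n : ℝ) ∧ 1 ≤ n ∧
    (F.P p {ω | VertCross (n : ℝ) ω}).toReal ≤ 0.001}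

/-- The raw characteristic length `L(p)` (with `L(p) = L(1-p)` for `p > p_c`). -/
def rawL (F : BernFamily) (p : ℝ) : ℝ :=
  if p < pcrit then rawLsub F p else rawLsub F (1 - p)

/-- The set of prescribed points of the regularization of `L`: `0`, `1`, and the
discontinuity points of the raw `L` in `(0,p_c) ∪ (p_c,1)`. -/
def discSet (F : BernFamily) : Set ℝ :=
  {0, 1} ∪ {p | (p ∈ Set.Ioo (0:ℝ) pcrit ∪ Set.Ioo pcrit 1) ∧ ¬ContinuousAt (rawL F) p}

/-- The background data for near-critical percolation on the triangular lattice: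
the Bernoulli measures, together with the regularized characteristic length `L`
(equal to the raw `L` at its discontinuity points, `0` at `0` and `1`, linearly
interpolated in between, continuous and strictly monotone on each side of `p_c`). -/
structure PercBackground extends BernFamily where
  L : ℝ → ℝ
  L_zero : L 0 = 0
  L_one : L 1 = 0
  L_disc : ∀ p, (p ∈ Set.Ioo (0:ℝ) pcrit ∪ Set.Ioo pcrit 1) →
    ¬ContinuousAt (rawL toBernFamily) p → L p = rawL toBernFamily p
  L_cont : ContinuousOn L (Set.Icc 0 1 \ {pcrit})
  L_mono : StrictMonoOn L (Set.Ico 0 pcrit)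
  L_anti : StrictAntiOn L (Set.Ioc pcrit 1)
  L_affine : ∀ p q, p ∈ discSet toBernFamily → q ∈ discSet toBernFamily → p < q →
    Set.Ioo p q ∩ discSet toBernFamily = ∅ → pcrit ∉ Set.Ioo p q →
    ∀ r ∈ Set.Icc p q, L r = L p + (r - p) / (q - p) * (L q - L p)

/-! ## Time parametrization and characteristic scales -/

/-- `p(t) = 1 - e^{-t}`. -/
def pOf (t : ℝ) : ℝ := 1 - Real.exp (-t)

/-- The critical time `t_c = log 2`. -/
def tcrit : ℝ := Real.log 2

/-- `θ(t) = θ(p(t))`. -/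
def thetaT (bg : PercBackground) (t : ℝ) : ℝ := theta bg.toBernFamily (pOf t)

/-- `L(t) = L(p(t))`. -/
def Ltime (bg : PercBackground) (t : ℝ) : ℝ := bg.L (pOf t)

/-- `c_T = 2/√3`, so that `|B_n| ~ c_T n²`. -/
def cTri : ℝ := 2 / Real.sqrt 3

/-- For frozen percolation: `Ψ_N(R)` is the (unique) `t > t_c` with `c_T R² θ(t) = N`. -/
def PsiN (bg : PercBackground) (N : ℕ) (R : ℝ) : ℝ :=
  sInf {t : ℝ | tcrit < t ∧ cTri * R ^ 2 * thetaT bg t = N}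

/-- `t_∞(N) = sup {t > t_c : Ψ_N(L(t)) = t}`. -/
def tInfN (bg : PercBackground) (N : ℕ) : ℝ :=
  sSup {t : ℝ | tcrit < t ∧ PsiN bg N (Ltime bg t) = t}

/-- The characteristic scale `m_∞(N) = L(t_∞(N))` of `N`-frozen percolation. -/
def mInfN (bg : PercBackground) (N : ℕ) : ℝ := Ltime bg (tInfN bg N)

/-- For forest fires: `Ψ_ζ(R)` is the (unique) `t > t_c` with `c_T R² θ(t)(t-t_c) = 1/ζ`. -/
def PsiZ (bg : PercBackground) (ζ : ℝ) (R : ℝ) : ℝ :=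
  sInf {t : ℝ | tcrit < t ∧ cTri * R ^ 2 * thetaT bg t * (t - tcrit) = 1 / ζ}

/-- `t_∞(ζ) = sup {t > t_c : Ψ_ζ(L(t)) = t}`. -/
def tInfZ (bg : PercBackground) (ζ : ℝ) : ℝ :=
  sSup {t : ℝ | tcrit < t ∧ PsiZ bg ζ (Ltime bg t) = t}

/-- The characteristic scale `m_∞(ζ) = L(t_∞(ζ))` of forest fires. -/
def mInfZ (bg : PercBackground) (ζ : ℝ) : ℝ := Ltime bg (tInfZ bg ζ)

/-- The one-arm probability `π₁(n)`: at `p_c`, there is an occupied path from a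
neighbour of the origin to the inner boundary of `B_n`. -/
def pi1 (F : BernFamily) (n : ℝ) : ℝ :=
  (F.P pcrit {ω | ∃ v w, adj origin v ∧ w ∈ innerBdry (Box n) ∧
    ConnIn (occSet ω) v w}).toReal

/-! ## Frozen percolation -/

/-- The vertices of `D` that are occupied in `η` with birth time `< t`. -/
def earlierOcc (D : Set TriV) (τ : TriV → ℝ) (t : ℝ) (η : Config) : Set TriV :=
  {u | u ∈ D ∧ η u = true ∧ τ u < t}

/-- `η` is the final configuration of `N`-frozen percolation on the domain `D`
driven by the birth times `τ`: a vertex `v ∈ D` is (eventually) occupied iff at its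
birth time no neighbour lies in an occupied cluster of volume `≥ N`. -/
def IsFrozenFinal (N : ℕ) (D : Set TriV) (τ : TriV → ℝ) (η : Config) : Prop :=
  (∀ v, v ∉ D → η v = false) ∧
  ∀ v ∈ D, (η v = true ↔
    ∀ w, adj v w → (clusterOf (earlierOcc D τ (τ v) η) w).encard < (N : ℕ∞))

/-- A set of vertices surrounds the origin: it contains it, or the connected
component of the origin in its complement is finite. -/
def SurroundsO (C : Set TriV) : Prop :=
  origin ∈ C ∨ (clusterOf Cᶜ origin).Finite

/-- `C` is an occupied cluster of the configuration `ω`. -/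
def IsOccCluster (ω : Config) (C : Set TriV) : Prop :=
  ∃ v, ω v = true ∧ C = occCluster ω v

/-- The collection `F` of frozen clusters (volume `≥ N`) surrounding the origin
in the final configuration `η`. -/
def frozenF (N : ℕ) (η : Config) : Set (Set TriV) :=
  {C | IsOccCluster η C ∧ (N : ℕ∞) ≤ C.encard ∧ SurroundsO C}

/-- `μ` is the product over the vertices of the exponential law of the birth times
(so that `P(τ_v ≤ t) = 1 - e^{-t}`, independently over vertices). -/
def IsExpProduct (μ : Measure (TriV → ℝ)) : Prop :=
  IsProbabilityMeasure μ ∧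
  ∀ (S : Finset TriV) (a : TriV → ℝ),
    μ {τ | ∀ v ∈ S, τ v ≤ a v} = ∏ v ∈ S, ENNReal.ofReal (1 - Real.exp (-(a v)))

/-- `n^FP = 1 / log (96/5)`. -/
def nFP : ℝ := 1 / Real.log (96 / 5)

/-- `n^FF = 1 / log (96/41)`. -/
def nFF : ℝ := 1 / Real.log (96 / 41)

/-! ## Circuits -/

/-- A circuit: a closed lattice path whose vertices are distinct except that the
last one equals the first one. -/
def IsCircuitList (l : List TriV) : Prop :=
  l ≠ [] ∧ l.Chain' adj ∧ l.head? = l.getLast? ∧ l.dropLast.Nodup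

/-- The set of vertices visited by a (circuit) list. -/
def circuitSet (l : List TriV) : Set TriV := {v | v ∈ l}

/-- `v` is frozen in the final configuration `η`: it belongs to an occupied
cluster of volume `≥ N`. -/
def frozenVtx (N : ℕ) (η : Config) (v : TriV) : Prop :=
  η v = true ∧ (N : ℕ∞) ≤ (occCluster η v).encard

/-- There exist `k` pairwise disjoint frozen circuits surrounding the origin. -/
def DisjointFrozenCircuits (N : ℕ) (η : Config) (k : ℕ) : Prop :=
  ∃ ls : Fin k → List TriV,
    (∀ i, IsCircuitList (ls i) ∧ (∀ v ∈ circuitSet (ls i), frozenVtx N η v) ∧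
      origin ∉ circuitSet (ls i) ∧ (clusterOf ((circuitSet (ls i))ᶜ) origin).Finite) ∧
    ∀ i j, i ≠ j → Disjoint (circuitSet (ls i)) (circuitSet (ls j))

/-! ## Frozen percolation with modified boundary rules -/

inductive FPSt | vac | occ | froz
deriving DecidableEq

/-- The occupied (non-frozen) vertices of a three-state configuration. -/
def occFP (s : TriV → FPSt) : Set TriV := {v | s v = FPSt.occ}

/-- No birth time of a vertex of `D` in the interval `(t₁, t₂]`. -/
def noBirthIoc (D : Set TriV) (τ : TriV → ℝ) (t₁ t₂ : ℝ) : Prop :=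
  ∀ u ∈ D, ¬(t₁ < τ u ∧ τ u ≤ t₂)

/-- No birth time of a vertex of `D` in the open interval `(t₁, t₂)`. -/
def noBirthIoo (D : Set TriV) (τ : TriV → ℝ) (t₁ t₂ : ℝ) : Prop :=
  ∀ u ∈ D, ¬(t₁ < τ u ∧ τ u < t₂)

/-- The union of the occupied clusters adjacent to `v`. -/
def unionAdjClusters (s : TriV → FPSt) (v : TriV) : Set TriV :=
  {u | ∃ w, adj v w ∧ ConnIn (occFP s) w u}

/-- `s` is a trajectory of `N`-frozen percolation with modified boundary rules on
`D`, driven by the birth times `τ`: at the birth time of `v`, if `{v}` together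
with the adjacent occupied clusters has volume `≥ N` then all

these vertices freeze, and otherwise `v` becomes occupied. -/
def IsModFPTraj (N : ℕ) (D : Set TriV) (τ : TriV → ℝ) (s : ℝ → TriV → FPSt) : Prop :=
  (∀ t v, v ∉ D → s t v = FPSt.vac) ∧
  (∀ v ∈ D, ∀ t, t < τ v → s t v = FPSt.vac) ∧
  (∀ v ∈ D, ∀ t, τ v ≤ t → s t v ≠ FPSt.vac) ∧
  (∀ t₁ t₂, t₁ ≤ t₂ → noBirthIoc D τ t₁ t₂ → s t₂ = s t₁) ∧
  (∀ v ∈ D, (∀ u ∈ D, u ≠ v → τ u ≠ τ v) →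
    ∀ t', t' < τ v → noBirthIoo D τ t' (τ v) →
      (((N : ℕ∞) ≤ (insert v (unionAdjClusters (s t') v)).encard →
          (∀ u ∈ insert v (unionAdjClusters (s t') v), s (τ v) u = FPSt.froz) ∧
          (∀ u ∉ insert v (unionAdjClusters (s t') v), s (τ v) u = s t' u)) ∧
        ((insert v (unionAdjClusters (s t') v)).encard < (N : ℕ∞) →
          s (τ v) v = FPSt.occ ∧ ∀ u, u ≠ v → s (τ v) u = s t' u)))

/-- The freezing time of a vertex. -/
def frzTime (s : ℝ → TriV → FPSt) (v : TriV) : ℝ := sInf {t | s t v = FPSt.froz}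

/-- `C` is a frozen cluster of the modified process: the set of vertices connected
to some frozen vertex `v` through vertices frozen at the same time as `v`. -/
def IsModFrozenCluster (s : ℝ → TriV → FPSt) (C : Set TriV) : Prop :=
  ∃ v, (∃ t, s t v = FPSt.froz) ∧
    C = {w | ConnIn {x | (∃ t, s t x = FPSt.froz) ∧ frzTime s x = frzTime s v} v w}

/-- The frozen clusters surrounding the origin, for the modified process. -/
def modFrozenF (s : ℝ → TriV → FPSt) : Set (Set TriV) :=
  {C | IsModFrozenCluster s C ∧ SurroundsO C}

/-! ## Forest fires without recovery -/

inductive FFSt | vac | occ | burnt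
deriving DecidableEq

/-- Driving randomness of a forest fire: the birth times, and the successive gaps
between the ignition times of each vertex. -/
abbrev FFOmega : Type := (TriV → ℝ) × (TriV → ℕ → ℝ)

/-- The `n`-th ignition time of `v`: the sum of the first `n+1` gaps. -/
def arrTime (g : TriV → ℕ → ℝ) (v : TriV) (n : ℕ) : ℝ :=
  ∑ i ∈ Finset.range (n + 1), g v i

/-- The law of the driving randomness of a forest fire with ignition rate `ζ`:
birth times are i.i.d. exponential of rate `1` and the ignition gaps are i.i.d.
exponential of rate `ζ`, all independent. -/
def IsFFLaw (ζ : ℝ) (μ : Measure FFOmega) : Prop :=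
  IsProbabilityMeasure μ ∧
  ∀ (S : Finset TriV) (T : Finset (TriV × ℕ)) (a : TriV → ℝ) (b : TriV × ℕ → ℝ),
    μ {x | (∀ v ∈ S, x.1 v ≤ a v) ∧ (∀ q ∈ T, x.2 q.1 q.2 ≤ b q)} =
      (∏ v ∈ S, ENNReal.ofReal (1 - Real.exp (-(a v)))) *
        ∏ q ∈ T, ENNReal.ofReal (1 - Real.exp (-(ζ * b q)))

/-- The occupied vertices of a three-state forest fire configuration. -/
def occFF (s : TriV → FFSt) : Set TriV := {v | s v = FFSt.occ}

/-- `t` is an event time (birth time, or ignition time not exceeding the stopping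
parameter `Tstop`) of a vertex of `D`. -/
def isEvtTime (D : Set TriV) (Tstop : ℝ≥0∞) (x : FFOmega) (t : ℝ) : Prop :=
  (∃ v ∈ D, x.1 v = t) ∨
    (∃ v ∈ D, ∃ n, arrTime x.2 v n = t ∧ ENNReal.ofReal t ≤ Tstop)

/-- No event time in `(t₁, t₂]`. -/
def noEvtIoc (D : Set TriV) (Tstop : ℝ≥0∞) (x : FFOmega) (t₁ t₂ : ℝ) : Prop :=
  ∀ t, t₁ < t → t ≤ t₂ → ¬ isEvtTime D Tstop x t

/-- No event time in `(t₁, t₂)`. -/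
def noEvtIoo (D : Set TriV) (Tstop : ℝ≥0∞) (x : FFOmega) (t₁ t₂ : ℝ) : Prop :=
  ∀ t, t₁ < t → t < t₂ → ¬ isEvtTime D Tstop x t

/-- `s` is a trajectory of the forest fire without recovery (FFWoR) on the domain
`D`, with ignitions discarded after time `Tstop` (take `Tstop = ⊤` for the plain
process): vertices become occupied at their birth times, and at an ignition time
of an occupied vertex its whole occupied cluster burns instantaneously; burnt
vertices stay burnt forever. -/
def IsFFWoRTraj (D : Set TriV) (Tstop : ℝ≥0∞) (x : FFOmega) (s : ℝ → TriV → FFSt) : Prop :=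
  (∀ t v, v ∉ D → s t v = FFSt.vac) ∧
  (∀ v ∈ D, ∀ t, t < x.1 v → s t v = FFSt.vac) ∧
  (∀ t₁ t₂, t₁ ≤ t₂ → noEvtIoc D Tstop x t₁ t₂ → s t₂ = s t₁) ∧
  (∀ v ∈ D, (∀ u ∈ D, u ≠ v → x.1 u ≠ x.1 v) →
    (∀ u ∈ D, ∀ n, arrTime x.2 u n ≠ x.1 v) →
    ∀ t', t' < x.1 v → noEvtIoo D Tstop x t' (x.1 v) →
      s (x.1 v) v = FFSt.occ ∧ ∀ u, u ≠ v → s (x.1 v) u = s t' u) ∧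
  (∀ v ∈ D, ∀ n, ENNReal.ofReal (arrTime x.2 v n) ≤ Tstop →
    (∀ u ∈ D, x.1 u ≠ arrTime x.2 v n) →
    (∀ u ∈ D, ∀ k, (u, k) ≠ (v, n) → arrTime x.2 u k ≠ arrTime x.2 v n) →
    ∀ t', t' < arrTime x.2 v n → noEvtIoo D Tstop x t' (arrTime x.2 v n) →
      ((s t' v = FFSt.occ →
          (∀ u ∈ clusterOf (occFF (s t')) v, s (arrTime x.2 v n) u = FFSt.burnt) ∧
          (∀ u ∉ clusterOf (occFF (s t')) v, s (arrTime x.2 v n) u = s t' u)) ∧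
        (s t' v ≠ FFSt.occ → s (arrTime x.2 v n) = s t')))

/-- The cluster `C` burns at time `t` in the trajectory `s`. -/
def IsBurnEvent (D : Set TriV) (Tstop : ℝ≥0∞) (x : FFOmega) (s : ℝ → TriV → FFSt)
    (t : ℝ) (C : Set TriV) : Prop :=
  ∃ v ∈ D, ∃ n, arrTime x.2 v n = t ∧ ENNReal.ofReal t ≤ Tstop ∧
    ∃ t', t' < t ∧ noEvtIoo D Tstop x t' t ∧ s t' v = FFSt.occ ∧
      C = clusterOf (occFF (s t')) v

/-- The collection `F` of burnt clusters surrounding the origin. -/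
def burntF (D : Set TriV) (Tstop : ℝ≥0∞) (x : FFOmega) (s : ℝ → TriV → FFSt) :
    Set (Set TriV) :=
  {C | (∃ t, IsBurnEvent D Tstop x s t C) ∧ SurroundsO C}

/-- `V_∞(ζ) = m_∞(ζ)² π₁(m_∞(ζ))`. -/
def VInf (bg : PercBackground) (ζ : ℝ) : ℝ :=
  mInfZ bg ζ ^ 2 * pi1 bg.toBernFamily (mInfZ bg ζ)

/-! ## Percolation with impurities -/

/-- Sample of percolation with impurities: a Bernoulli configuration, the hole
indicators, and the hole radii. -/
abbrev ImpOmega : Type := Config × (TriV → Bool) × (TriV → ℝ)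

/-- The hole (impurity) centered at `u` (empty if no hole is centered at `u`). -/
def holeAt (x : ImpOmega) (u : TriV) : Set TriV :=
  {v | x.2.1 u = true ∧ v ∈ BoxAt u (x.2.2 u)}

/-- `v` belongs to some hole. -/
def inSomeHole (x : ImpOmega) (v : TriV) : Prop := ∃ u, v ∈ holeAt x u

/-- The occupied set of the percolation process with impurities: Bernoulli-occupied
vertices lying in no hole. -/
def impOccSet (x : ImpOmega) : Set TriV := {v | x.1 v = true ∧ ¬ inSomeHole x v}

/-- `μ` is the law of percolation with impurities: the Bernoulli configuration has
parameter `p`, a hole is centered at `v` with probability `π v`, the radii have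
law `ρ`, and everything is independent. -/
def IsImpurityLaw (μ : Measure ImpOmega) (p : ℝ) (π : TriV → ℝ) (ρ : Measure ℝ) : Prop :=
  IsProbabilityMeasure μ ∧ IsProbabilityMeasure ρ ∧
  ∀ (S₁ S₂ S₃ : Finset TriV) (f h : TriV → Bool) (b : TriV → ℝ),
    μ {x | (∀ v ∈ S₁, x.1 v = f v) ∧ (∀ v ∈ S₂, x.2.1 v = h v) ∧
        (∀ v ∈ S₃, x.2.2 v ≤ b v)} =
      (∏ v ∈ S₁, (if f v then ENNReal.ofReal p else ENNReal.ofReal (1 - p))) *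
        (∏ v ∈ S₂, (if h v then ENNReal.ofReal (π v) else ENNReal.ofReal (1 - π v))) *
        ∏ v ∈ S₃, ρ (Set.Iic (b v))

/-- The Assumption on the impurity parameters `(π^{(m)})`, `(ρ^{(m)})`: for all
`m ≥ 1`, `r ≥ 0` and all vertices,
`π_v^{(m)} ρ^{(m)}([r,∞)) ≤ (υ(m)/m²) (max(r,1)/m)^{γ-2} e^{-c r/m}`. -/
def ImpurityAssumption (c γ : ℝ) (π : ℕ → TriV → ℝ) (ρ : ℕ → Measure ℝ)
    (υ : ℕ → ℝ) : Prop :=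
  ∀ m : ℕ, 1 ≤ m → ∀ r : ℝ, 0 ≤ r → ∀ _v : TriV,
    (π m _v) * (ρ m (Set.Ici r)).toReal ≤
      υ m / (m : ℝ) ^ 2 * (max r 1 / (m : ℝ)) ^ (γ - 2) * Real.exp (-c * r / (m : ℝ))

/-- The event `H(A)` that some hole crosses the annulus `A_{n₁,n₂}(z)`. -/
def HoleCrossAnn (x : ImpOmega) (z : TriV) (n₁ n₂ : ℝ) : Prop :=
  ∃ u, (holeAt x u ∩ outerBdry (BoxAt z n₁)).Nonempty ∧
    (holeAt x u ∩ innerBdry (BoxAt z n₂)).Nonempty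

/-- The event `H̄̄(A)`: some hole crosses the annulus `A_{n₁,n₂}(z)`, does not
contain `B_{n₁}(z)`, and does not reach the inner boundary of `B_{2n₂}(z)`. -/
def HoleCrossAnnRestr (x : ImpOmega) (z : TriV) (n₁ n₂ : ℝ) : Prop :=
  ∃ u, (holeAt x u ∩ outerBdry (BoxAt z n₁)).Nonempty ∧
    (holeAt x u ∩ innerBdry (BoxAt z n₂)).Nonempty ∧
    ¬ BoxAt z n₁ ⊆ holeAt x u ∧
    holeAt x u ∩ innerBdry (BoxAt z (2 * n₂)) = ∅

/-! ## Arm events -/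

/-- A one-arm event inside the set `A`: a path in `A ∩ A_{n₁,n₂}` from the outer
boundary of `B_{n₁}` to the inner boundary of `B_{n₂}`. -/
def OneArm (A : Set TriV) (n₁ n₂ : ℝ) : Prop :=
  ∃ v w, v ∈ outerBdry (Box n₁) ∧ w ∈ innerBdry (Box n₂) ∧
    ConnIn (A ∩ Ann n₁ n₂) v w

/-- An arm of the annulus `A_{n₁,n₂}` inside the set `A`, given as a list. -/
def IsArm (A : Set TriV) (n₁ n₂ : ℝ) (l : List TriV) : Prop :=
  l ≠ [] ∧ l.Chain' adj ∧ (∀ x ∈ l, x ∈ A ∩ Ann n₁ n₂) ∧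
    (∃ v, l.head? = some v ∧ v ∈ outerBdry (Box n₁)) ∧
    ∃ w, l.getLast? = some w ∧ w ∈ innerBdry (Box n₂)

/-- The argument (angle) of the starting point of an arm. -/
def armArg (l : List TriV) : ℝ := ((l.head?).map fun v => Complex.arg v.1).getD 0

/-- The four-arm event with types occupied, vacant, occupied, vacant in
counterclockwise order: four disjoint arms, in increasing angular order of their
starting points, with alternating types. -/
def FourArmOVOV (occ vac : Set TriV) (n₁ n₂ : ℝ) : Prop :=
  ∃ l₁ l₂ l₃ l₄ : List TriV,
    ((IsArm occ n₁ n₂ l₁ ∧ IsArm vac n₁ n₂ l₂ ∧ IsArm occ n₁ n₂ l₃ ∧ IsArm vac n₁ n₂ l₄) ∨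
      (IsArm vac n₁ n₂ l₁ ∧ IsArm occ n₁ n₂ l₂ ∧ IsArm vac n₁ n₂ l₃ ∧ IsArm occ n₁ n₂ l₄)) ∧
    armArg l₁ < armArg l₂ ∧ armArg l₂ < armArg l₃ ∧ armArg l₃ < armArg l₄ ∧
    (∀ x ∈ l₁, x ∉ l₂ ∧ x ∉ l₃ ∧ x ∉ l₄) ∧
    (∀ x ∈ l₂, x ∉ l₃ ∧ x ∉ l₄) ∧
    ∀ x ∈ l₃, x ∉ l₄

/-- The four-arm probability `π₄(n₁,n₂)` at criticality. -/
def pi4 (F : BernFamily) (n₁ n₂ : ℝ) : ℝ :=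
  (F.P pcrit {ω | FourArmOVOV (occSet ω) {v | ω v = false} n₁ n₂}).toReal

/-- The union of the holes with centers in `U`. -/
def holesOf (x : ImpOmega) (U : Set TriV) : Set TriV := ⋃ u ∈ U, holeAt x u

/-- The event `W₄(A_{n₁,n₂})`: for some set `U` of hole centers, the configuration
obtained by turning vacant all vertices covered by the holes centered in `U`
satisfies the four-arm event. -/
def W4 (x : ImpOmega) (n₁ n₂ : ℝ) : Prop :=
  ∃ U : Set TriV,
    FourArmOVOV (occSet x.1 \ holesOf x U) ({v | x.1 v = false} ∪ holesOf x U) n₁ n₂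

/-! ## Largest cluster in a box -/

/-- `C` is a (connected) cluster of the set `A`. -/
def IsClusterIn (A : Set TriV) (C : Set TriV) : Prop := ∃ v ∈ A, C = clusterOf A v

/-- `C` is a largest cluster of the set `A`. -/
def IsMaxCluster (A : Set TriV) (C : Set TriV) : Prop :=
  IsClusterIn A C ∧ ∀ C', IsClusterIn A C' → C'.ncard ≤ C.ncard

/-- The event `Θ(A_{n/2,n} | C)`: the cluster `C` contains a circuit in the
annulus `A_{n/2,n}` surrounding `B_{n/2}`, and a crossing of this annulus. -/
def ThetaEvent (n : ℝ) (C : Set TriV) : Prop :=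
  (∃ l : List TriV, IsCircuitList l ∧ circuitSet l ⊆ C ∩ Ann (n / 2) n ∧
    (clusterOf ((circuitSet l)ᶜ) origin).Finite) ∧
  ∃ v w, v ∈ outerBdry (Box (n / 2)) ∧ w ∈ innerBdry (Box n) ∧
    ConnIn (C ∩ Ann (n / 2) n) v w

/-! ## Radius law (for the domination lemma) -/

/-- The radius of a set of vertices, seen from the origin. -/
def radiusOf (C : Set TriV) : ℝ := sInf {n : ℝ | 0 ≤ n ∧ C ⊆ Box n}

/-- `ρ` is the law of `rad(C(0))` in Bernoulli percolation with parameter `p(τ)`,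
where `τ` is uniform on `[0, t_c - ε̄]`. -/
def IsRadiusLaw (F : BernFamily) (εbar : ℝ) (ρ : Measure ℝ) : Prop :=
  IsProbabilityMeasure ρ ∧ ρ (Set.Iio 0) = 0 ∧
  ∀ b : ℝ, 0 ≤ b →
    ρ (Set.Iic b) * ENNReal.ofReal (tcrit - εbar) =
      ∫⁻ u in Set.Icc (0:ℝ) (tcrit - εbar), F.P (pOf u) {ω | occCluster ω origin ⊆ Box b}

/-! A hole `B_r(u)` realising the event must come within distance `1` of `B_{n₁}(z)` and of the
boundary of `B_{n₂}(z)`, must not swallow `B_{n₁}(z)`, and must have `r < 2n₂ + n₁ + 1`, since a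
larger box through a point near `B_{n₁}(z)` spills over the inner boundary of `B_{2n₂}(z)`. So if
`d` is the sup-distance from `u` to `z`, then `r ∈ [d - n₁ - 1, d + n₁]` and `r ≥ n₂/4 - 1`: for a
given radius, the admissible centres lie in a square annulus of width `2n₁ + 1` and radius
`O(n₂)`, which holds `O(n₁ n₂)` vertices because distinct vertices are at distance at least `1`.
A union bound over centres followed by Fubini in the radius gives
`P ≤ O(n₁ n₂) · sup_v π_v · ρ([n₂/4 - 1, ∞))`, and the Assumption bounds the last product. -/

namespace TriPt

lemma exp_I_pi_div_three :
    Complex.exp (Complex.I * ((Real.pi : ℂ) / 3)) = ⟨1 / 2, Real.sqrt 3 / 2⟩ := by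
  rw [show Complex.I * ((Real.pi : ℂ) / 3) = ((Real.pi / 3 : ℝ) : ℂ) * Complex.I by
    push_cast; ring]
  apply Complex.ext
  · rw [Complex.exp_ofReal_mul_I_re, Real.cos_pi_div_three]
  · rw [Complex.exp_ofReal_mul_I_im, Real.sin_pi_div_three]

lemma re_add_mul_exp (x y : ℤ) :
    ((x : ℂ) + y * Complex.exp (Complex.I * ((Real.pi : ℂ) / 3))).re = x + y / 2 := by
  rw [exp_I_pi_div_three]; simp [div_eq_mul_inv]

lemma im_add_mul_exp (x y : ℤ) :
    ((x : ℂ) + y * Complex.exp (Complex.I * ((Real.pi : ℂ) / 3))).im =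
      y * (Real.sqrt 3 / 2) := by
  rw [exp_I_pi_div_three]; simp

lemma re_im {w : ℂ} (h : TriPt w) :
    ∃ x y : ℤ, w.re = x + y / 2 ∧ w.im = y * (Real.sqrt 3 / 2) := by
  obtain ⟨x, y, rfl⟩ := h
  exact ⟨x, y, re_add_mul_exp x y, im_add_mul_exp x y⟩

lemma sub {v w : ℂ} (hv : TriPt v) (hw : TriPt w) : TriPt (v - w) := by
  obtain ⟨x, y, rfl⟩ := hv
  obtain ⟨x', y', rfl⟩ := hw
  exact ⟨x - x', y - y', by push_cast; ring⟩

lemma add_intCast {w : ℂ} (hw : TriPt w) (k : ℤ) : TriPt (w + k) := by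
  obtain ⟨x, y, rfl⟩ := hw
  exact ⟨x + k, y, by push_cast; ring⟩

/-- `‖x + y e^{iπ/3}‖² = x² + xy + y²`, a positive integer unless `x = y = 0`. -/
lemma one_le_norm {w : ℂ} (hw : TriPt w) (hw0 : w ≠ 0) : 1 ≤ ‖w‖ := by
  obtain ⟨x, y, hre, him⟩ := hw.re_im
  have hxy : (x, y) ≠ (0, 0) := by
    rintro ⟨⟩
    exact hw0 (Complex.ext (by simpa using hre) (by simpa using him))
  have hq : (1 : ℤ) ≤ x ^ 2 + x * y + y ^ 2 := by
    by_contra! h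
    have hy : y = 0 := by nlinarith [sq_nonneg (2 * x + y)]
    have hx : x = 0 := by subst hy; nlinarith
    exact hxy (by rw [hx, hy])
  have h3 : Real.sqrt 3 ^ 2 = 3 := Real.sq_sqrt (by norm_num)
  have hnorm : ‖w‖ ^ 2 = (x : ℝ) ^ 2 + x * y + y ^ 2 := by
    rw [Complex.sq_norm, Complex.normSq_apply, hre, him]
    linear_combination ((y : ℝ) ^ 2 / 4) * h3
  have hq' : (1 : ℝ) ≤ (x : ℝ) ^ 2 + x * y + y ^ 2 := by exact_mod_cast hq
  exact (one_le_sq_iff₀ (norm_nonneg w)).1 (hnorm ▸ hq')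

end TriPt

/-- Two points of one half-unit cell are closer than `1`, distinct vertices are not. -/
lemma injective_floor_two_mul_re_im :
    Function.Injective fun v : TriV => (⌊2 * v.1.re⌋, ⌊2 * v.1.im⌋) := by
  intro v w hvw
  simp only [Prod.mk.injEq] at hvw
  by_contra hne
  have hsub : v.1 - w.1 ≠ 0 := sub_ne_zero.2 fun h => hne (Subtype.ext h)
  have h1 := (v.2.sub w.2).one_le_norm hsub
  have hre := abs_lt.1 (Int.abs_sub_lt_one_of_floor_eq_floor hvw.1)
  have him := abs_lt.1 (Int.abs_sub_lt_one_of_floor_eq_floor hvw.2)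
  have hnorm : ‖v.1 - w.1‖ ^ 2 = (v.1.re - w.1.re) ^ 2 + (v.1.im - w.1.im) ^ 2 := by
    rw [Complex.sq_norm, Complex.normSq_apply, Complex.sub_re, Complex.sub_im]; ring
  nlinarith

instance : Countable TriV := injective_floor_two_mul_re_im.countable

lemma card_Icc_floor_le (a b : ℝ) :
    ((Finset.Icc ⌊a⌋ ⌊b⌋).card : ℝ≥0∞) ≤ ENNReal.ofReal (b - a + 2) := by
  rw [Int.card_Icc, ← ENNReal.ofReal_natCast, ENNReal.ofReal_le_ofReal_iff']
  rcases le_total 0 (⌊b⌋ + 1 - ⌊a⌋) with h | h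
  · left
    rw [← Int.cast_natCast, Int.toNat_of_nonneg h]
    push_cast
    linarith [Int.floor_le b, Int.sub_one_lt_floor a]
  · right
    simp [Int.toNat_of_nonpos h]

lemma encard_rectangle_le (a b c d : ℝ) :
    ({v : TriV | v.1.re ∈ Icc a b ∧ v.1.im ∈ Icc c d}.encard : ℝ≥0∞) ≤
      ENNReal.ofReal (2 * (b - a) + 2) * ENNReal.ofReal (2 * (d - c) + 2) := by
  set cells := Finset.Icc ⌊2 * a⌋ ⌊2 * b⌋ ×ˢ Finset.Icc ⌊2 * c⌋ ⌊2 * d⌋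
  have hsub : (fun v : TriV => (⌊2 * v.1.re⌋, ⌊2 * v.1.im⌋)) ''
      {v : TriV | v.1.re ∈ Icc a b ∧ v.1.im ∈ Icc c d} ⊆ cells := by
    rintro _ ⟨v, ⟨⟨h₁, h₂⟩, h₃, h₄⟩, rfl⟩
    simp only [cells, Finset.coe_product, Finset.coe_Icc, mem_prod, mem_Icc]
    exact ⟨⟨Int.floor_mono (by linarith), Int.floor_mono (by linarith)⟩,
      Int.floor_mono (by linarith), Int.floor_mono (by linarith)⟩
  have hcard : {v : TriV | v.1.re ∈ Icc a b ∧ v.1.im ∈ Icc c d}.encard ≤ cells.card := by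
    rw [← injective_floor_two_mul_re_im.injOn.encard_image, ← Set.encard_coe_eq_coe_finsetCard]
    exact Set.encard_le_encard hsub
  calc _ ≤ ((cells.card : ℕ∞) : ℝ≥0∞) := ENat.toENNReal_le.2 hcard
    _ = (Finset.Icc ⌊2 * a⌋ ⌊2 * b⌋).card * (Finset.Icc ⌊2 * c⌋ ⌊2 * d⌋).card := by
      simp [cells, Finset.card_product]
    _ ≤ _ := by gcongr <;> exact (card_Icc_floor_le _ _).trans_eq (by ring_nf)

/-- The sup-norm distance: `BoxAt z n` is the closed `boxDist`-ball of radius `n` around `z`. -/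
def boxDist (v w : TriV) : ℝ := dist (Complex.equivRealProd v.1) (Complex.equivRealProd w.1)

lemma boxDist_eq (v w : TriV) : boxDist v w = max |v.1.re - w.1.re| |v.1.im - w.1.im| := by
  simp [boxDist, Prod.dist_eq, Real.dist_eq]

lemma boxDist_nonneg (v w : TriV) : 0 ≤ boxDist v w := dist_nonneg

lemma boxDist_comm (v w : TriV) : boxDist v w = boxDist w v := dist_comm _ _

lemma boxDist_triangle (u v w : TriV) : boxDist u w ≤ boxDist u v + boxDist v w :=
  dist_triangle _ _ _

lemma mem_BoxAt {v z : TriV} {n : ℝ} :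
    v ∈ BoxAt z n ↔ |v.1.re - z.1.re| ≤ n ∧ |v.1.im - z.1.im| ≤ n := Iff.rfl

lemma mem_BoxAt_iff_boxDist_le {v z : TriV} {n : ℝ} : v ∈ BoxAt z n ↔ boxDist v z ≤ n := by
  rw [mem_BoxAt, boxDist_eq, max_le_iff]

lemma boxDist_le_one_of_adj {v w : TriV} (h : adj v w) : boxDist v w ≤ 1 := by
  rw [boxDist_eq, ← h, ← Complex.sub_re, ← Complex.sub_im]
  exact max_le (Complex.abs_re_le_norm _) (Complex.abs_im_le_norm _)

lemma boxDist_le_of_mem_outerBdry {v z : TriV} {n : ℝ} (h : v ∈ outerBdry (BoxAt z n)) :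
    boxDist v z ≤ n + 1 := by
  obtain ⟨-, w, hw, hvw⟩ := h
  linarith [boxDist_triangle v w z, boxDist_le_one_of_adj hvw, mem_BoxAt_iff_boxDist_le.1 hw]

lemma lt_boxDist_of_mem_innerBdry {v z : TriV} {n : ℝ} (h : v ∈ innerBdry (BoxAt z n)) :
    n - 1 < boxDist v z := by
  obtain ⟨-, w, hw, hvw⟩ := h
  have hw' : n < boxDist w z := not_le.1 (mt mem_BoxAt_iff_boxDist_le.2 hw)
  linarith [boxDist_triangle w v z, boxDist_comm w v, boxDist_le_one_of_adj hvw]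

lemma exists_Icc_add_one_subset {p u r : ℝ} (hpu : |p - u| ≤ r) (hr : 1 ≤ r) :
    ∃ B, Icc B (B + 1) ⊆ Icc (p - 1) (p + 1) ∩ Icc (u - r) (u + r) := by
  rw [abs_le] at hpu
  rcases le_total p u with h | h
  · exact ⟨p, fun t ⟨h₁, h₂⟩ => ⟨⟨by linarith, by linarith⟩, by linarith, by linarith⟩⟩
  · exact ⟨p - 1, fun t ⟨h₁, h₂⟩ => ⟨⟨by linarith, by linarith⟩, by linarith, by linarith⟩⟩

lemma exists_int_mul_mem_Icc (B : ℝ) : ∃ y : ℤ, (y : ℝ) * (Real.sqrt 3 / 2) ∈ Icc B (B + 1) := by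
  obtain ⟨y, ⟨h₁, h₂⟩, -⟩ :=
    existsUnique_add_zsmul_mem_Ico (show (0 : ℝ) < Real.sqrt 3 / 2 by positivity) 0 B
  have h3 : Real.sqrt 3 < 2 := by
    rw [Real.sqrt_lt' two_pos]; norm_num
  refine ⟨y, ?_, ?_⟩ <;> simp only [zero_add, zsmul_eq_mul] at h₁ h₂ <;> linarith

lemma exists_vertex_re_mem_Ioc (A B : ℝ) :
    ∃ v : TriV, v.1.re ∈ Ioc A (A + 1) ∧ v.1.im ∈ Icc B (B + 1) := by
  obtain ⟨y, hy⟩ := exists_int_mul_mem_Icc B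
  obtain ⟨x, hx, -⟩ := existsUnique_add_zsmul_mem_Ioc one_pos ((y : ℝ) / 2) A
  refine ⟨⟨x + y * Complex.exp (Complex.I * ((Real.pi : ℂ) / 3)), x, y, rfl⟩, ?_, ?_⟩
  · rw [TriPt.re_add_mul_exp]; simpa [add_comm] using hx
  · rwa [TriPt.im_add_mul_exp]

lemma exists_vertex_re_mem_Ico (A B : ℝ) :
    ∃ v : TriV, v.1.re ∈ Ico A (A + 1) ∧ v.1.im ∈ Icc B (B + 1) := by
  obtain ⟨y, hy⟩ := exists_int_mul_mem_Icc B
  obtain ⟨x, hx, -⟩ := existsUnique_add_zsmul_mem_Ico one_pos ((y : ℝ) / 2) A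
  refine ⟨⟨x + y * Complex.exp (Complex.I * ((Real.pi : ℂ) / 3)), x, y, rfl⟩, ?_, ?_⟩
  · rw [TriPt.re_add_mul_exp]; simpa [add_comm] using hx
  · rwa [TriPt.im_add_mul_exp]

/-- The witness is a vertex at horizontal distance about `R` from `z`, near the height of `p`,
on the side to which `B_r(u)` extends beyond `p`. -/
lemma BoxAt_inter_innerBdry_nonempty {z u p : TriV} {a r R : ℝ} (hpu : p ∈ BoxAt u r)
    (hpz : p ∈ BoxAt z a) (hR : a + 1 ≤ R) (hr : R + a ≤ r) :
    (BoxAt u r ∩ innerBdry (BoxAt z R)).Nonempty := by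
  rw [mem_BoxAt] at hpu hpz
  have ha : 0 ≤ a := (abs_nonneg _).trans hpz.1
  obtain ⟨B, hB⟩ := exists_Icc_add_one_subset hpu.2 (by linarith)
  simp only [abs_le] at hpu hpz
  rcases le_total p.1.re u.1.re with h | h
  · obtain ⟨v, ⟨hv₁, hv₂⟩, hvB⟩ := exists_vertex_re_mem_Ioc (z.1.re + R - 1) B
    obtain ⟨⟨hv₃, hv₄⟩, hv₅, hv₆⟩ := hB hvB
    refine ⟨v, ?_, ?_, ⟨v.1 + 1, by exact_mod_cast v.2.add_intCast 1⟩, ?_, by simp [adj]⟩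
    · simp only [mem_BoxAt, abs_le]; refine ⟨⟨?_, ?_⟩, ?_, ?_⟩ <;> linarith
    · simp only [mem_BoxAt, abs_le]; refine ⟨⟨?_, ?_⟩, ?_, ?_⟩ <;> linarith
    · simp only [mem_BoxAt, Complex.add_re, Complex.one_re, abs_le]
      intro h'
      linarith [h'.1.2]
  · obtain ⟨v, ⟨hv₁, hv₂⟩, hvB⟩ := exists_vertex_re_mem_Ico (z.1.re - R) B
    obtain ⟨⟨hv₃, hv₄⟩, hv₅, hv₆⟩ := hB hvB
    refine ⟨v, ?_, ?_, ⟨v.1 - 1, by simpa [sub_eq_add_neg] using v.2.add_intCast (-1)⟩, ?_,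
      by simp [adj]⟩
    · simp only [mem_BoxAt, abs_le]; refine ⟨⟨?_, ?_⟩, ?_, ?_⟩ <;> linarith
    · simp only [mem_BoxAt, abs_le]; refine ⟨⟨?_, ?_⟩, ?_, ?_⟩ <;> linarith
    · simp only [mem_BoxAt, Complex.sub_re, Complex.one_re, abs_le]
      intro h'
      linarith [h'.1.1]

lemma encard_annulus_le (z : TriV) (ℓ L : ℝ) :
    ({u : TriV | ℓ ≤ boxDist u z ∧ boxDist u z ≤ L}.encard : ℝ≥0∞) ≤
      4 * (ENNReal.ofReal (2 * (L - ℓ) + 2) * ENNReal.ofReal (4 * L + 2)) := by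
  set R₁ := {v : TriV | v.1.re ∈ Icc (z.1.re + ℓ) (z.1.re + L) ∧
    v.1.im ∈ Icc (z.1.im - L) (z.1.im + L)}
  set R₂ := {v : TriV | v.1.re ∈ Icc (z.1.re - L) (z.1.re - ℓ) ∧
    v.1.im ∈ Icc (z.1.im - L) (z.1.im + L)}
  set R₃ := {v : TriV | v.1.re ∈ Icc (z.1.re - L) (z.1.re + L) ∧
    v.1.im ∈ Icc (z.1.im + ℓ) (z.1.im + L)}
  set R₄ := {v : TriV | v.1.re ∈ Icc (z.1.re - L) (z.1.re + L) ∧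
    v.1.im ∈ Icc (z.1.im - L) (z.1.im - ℓ)}
  have hsub : {u : TriV | ℓ ≤ boxDist u z ∧ boxDist u z ≤ L} ⊆ R₁ ∪ R₂ ∪ R₃ ∪ R₄ := by
    rintro u ⟨h₁, h₂⟩
    rw [boxDist_eq, le_max_iff] at h₁
    rw [boxDist_eq, max_le_iff, abs_le, abs_le] at h₂
    obtain ⟨⟨h₃, h₄⟩, h₅, h₆⟩ := h₂
    rcases h₁ with h | h
    · rcases le_total 0 (u.1.re - z.1.re) with hs | hs
      · rw [abs_of_nonneg hs] at h
        exact Or.inl (Or.inl (Or.inl ⟨⟨by linarith, by linarith⟩, by linarith, by linarith⟩))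
      · rw [abs_of_nonpos hs] at h
        exact Or.inl (Or.inl (Or.inr ⟨⟨by linarith, by linarith⟩, by linarith, by linarith⟩))
    · rcases le_total 0 (u.1.im - z.1.im) with hs | hs
      · rw [abs_of_nonneg hs] at h
        exact Or.inl (Or.inr ⟨⟨by linarith, by linarith⟩, by linarith, by linarith⟩)
      · rw [abs_of_nonpos hs] at h
        exact Or.inr ⟨⟨by linarith, by linarith⟩, by linarith, by linarith⟩
  have hunion : (R₁ ∪ R₂ ∪ R₃ ∪ R₄).encard ≤ R₁.encard + R₂.encard + R₃.encard + R₄.encard :=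
    (encard_union_le _ _).trans (add_le_add_left
      ((encard_union_le _ _).trans (add_le_add_left (encard_union_le _ _) _)) _)
  calc _ ≤ ((R₁.encard + R₂.encard + R₃.encard + R₄.encard : ℕ∞) : ℝ≥0∞) :=
        ENat.toENNReal_le.2 ((encard_le_encard hsub).trans hunion)
    _ ≤ _ := by
      simp only [ENat.toENNReal_add]
      rw [show (4 : ℝ≥0∞) = 1 + 1 + 1 + 1 by norm_num]
      simp only [add_mul, one_mul]
      gcongr <;> exact (encard_rectangle_le _ _ _ _).trans_eq (by ring_nf)

/-- The radii that a hole centred at `boxDist`-distance `d` from `z` can have if it realises the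
event `H̄̄(A_{n₁,n₂}(z))`. -/
def radiusWindow (n₁ n₂ d : ℝ) : Set ℝ :=
  Icc (max (max (d - n₁ - 1) (n₂ - 1 - d)) 0) (min (d + n₁) (2 * n₂ + n₁ + 1))

lemma mem_radiusWindow {n₁ n₂ d r : ℝ} :
    r ∈ radiusWindow n₁ n₂ d ↔ (d - n₁ - 1 ≤ r ∧ n₂ - 1 - d ≤ r ∧ 0 ≤ r) ∧
      r ≤ d + n₁ ∧ r ≤ 2 * n₂ + n₁ + 1 := by
  simp [radiusWindow, and_assoc]

lemma radiusWindow_subset_Ici {n₁ n₂ : ℝ} (hn₁₂ : n₁ ≤ n₂ / 2) (d : ℝ) :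
    radiusWindow n₁ n₂ d ⊆ Ici (max (n₂ / 4 - 1) 0) := fun r hr => by
  rw [mem_radiusWindow] at hr
  exact max_le (by linarith) hr.1.2.2

lemma holeAt_eq_BoxAt {x : ImpOmega} {u : TriV} (h : x.2.1 u = true) :
    holeAt x u = BoxAt u (x.2.2 u) := by
  ext v; simp [holeAt, h]

lemma radius_mem_radiusWindow {x : ImpOmega} {z u : TriV} {n₁ n₂ : ℝ} (hn₁ : 1 ≤ n₁)
    (hn₁₂ : n₁ ≤ n₂ / 2)
    (h₁ : (holeAt x u ∩ outerBdry (BoxAt z n₁)).Nonempty)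
    (h₂ : (holeAt x u ∩ innerBdry (BoxAt z n₂)).Nonempty)
    (h₃ : ¬ BoxAt z n₁ ⊆ holeAt x u)
    (h₄ : holeAt x u ∩ innerBdry (BoxAt z (2 * n₂)) = ∅) :
    x.2.1 u = true ∧ x.2.2 u ∈ radiusWindow n₁ n₂ (boxDist u z) := by
  obtain ⟨p, ⟨hx, hpu⟩, hp⟩ := h₁
  rw [holeAt_eq_BoxAt hx] at h₂ h₃ h₄
  obtain ⟨q, hqu, hq⟩ := h₂
  obtain ⟨w, hwz, hwu⟩ := not_subset.1 h₃
  have hpz := boxDist_le_of_mem_outerBdry hp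
  have hqz := lt_boxDist_of_mem_innerBdry hq
  have hr : x.2.2 u < 2 * n₂ + n₁ + 1 := by
    by_contra! hr
    exact (BoxAt_inter_innerBdry_nonempty hpu (mem_BoxAt_iff_boxDist_le.2 hpz)
      (by linarith) (by linarith)).ne_empty h₄
  rw [mem_BoxAt_iff_boxDist_le] at hpu hqu hwz hwu
  refine ⟨hx, mem_radiusWindow.2 ⟨⟨?_, ?_, (boxDist_nonneg p u).trans hpu⟩, ?_, hr.le⟩⟩
  · linarith [boxDist_triangle u p z, boxDist_comm u p]
  · linarith [boxDist_triangle q u z]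
  · linarith [boxDist_triangle w z u, boxDist_comm z u]

lemma encard_setOf_mem_radiusWindow_le (z : TriV) {n₁ n₂ : ℝ} (hn₁ : 1 ≤ n₁)
    (hn₁₂ : n₁ ≤ n₂ / 2) (t : ℝ) :
    ({u : TriV | t ∈ radiusWindow n₁ n₂ (boxDist u z)}.encard : ℝ≥0∞) ≤
      ENNReal.ofReal (544 * n₁ * n₂) := by
  by_cases ht : t ≤ 2 * n₂ + n₁ + 1
  · have hsub : {u : TriV | t ∈ radiusWindow n₁ n₂ (boxDist u z)} ⊆
        {u | t - n₁ ≤ boxDist u z ∧ boxDist u z ≤ t + n₁ + 1} :=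
      fun u (hu : t ∈ radiusWindow n₁ n₂ (boxDist u z)) => by
      rw [mem_radiusWindow] at hu
      exact ⟨by linarith, by linarith⟩
    calc _ ≤ ({u | t - n₁ ≤ boxDist u z ∧ boxDist u z ≤ t + n₁ + 1}.encard : ℝ≥0∞) :=
          ENat.toENNReal_le.2 (encard_le_encard hsub)
      _ ≤ 4 * (ENNReal.ofReal (2 * (t + n₁ + 1 - (t - n₁)) + 2) *
            ENNReal.ofReal (4 * (t + n₁ + 1) + 2)) := encard_annulus_le _ _ _
      _ ≤ ENNReal.ofReal 4 * (ENNReal.ofReal (8 * n₁) * ENNReal.ofReal (17 * n₂)) := by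
        rw [ENNReal.ofReal_ofNat]
        gcongr <;> linarith
      _ = ENNReal.ofReal (544 * n₁ * n₂) := by
        rw [← ENNReal.ofReal_mul (by linarith), ← ENNReal.ofReal_mul (by norm_num)]
        ring_nf
  · have hempty : {u : TriV | t ∈ radiusWindow n₁ n₂ (boxDist u z)} = ∅ :=
      eq_empty_iff_forall_notMem.2 fun u hu => ht (mem_radiusWindow.1 hu).2.2
    simp [hempty]

lemma tsum_measure_le_mul_of_encard_le {α ι : Type*} [MeasurableSpace α] [Countable ι]
    (ρ : Measure α) {T : ι → Set α} (hT : ∀ i, MeasurableSet (T i)) {s : Set α}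
    (hs : MeasurableSet s) (hTs : ∀ i, T i ⊆ s) {N : ℝ≥0∞}
    (hN : ∀ t ∈ s, ({i | t ∈ T i}.encard : ℝ≥0∞) ≤ N) :
    ∑' i, ρ (T i) ≤ N * ρ s := by
  have hcount : ∀ t, ∑' i, (T i).indicator 1 t = ({i | t ∈ T i}.encard : ℝ≥0∞) := fun t => by
    rw [← ENNReal.tsum_set_one, tsum_subtype {i | t ∈ T i} fun _ => (1 : ℝ≥0∞)]
    exact tsum_congr fun i => rfl
  calc ∑' i, ρ (T i) = ∑' i, ∫⁻ t, (T i).indicator 1 t ∂ρ := by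
        simp only [lintegral_indicator_one (hT _)]
    _ = ∫⁻ t, ∑' i, (T i).indicator 1 t ∂ρ :=
        (lintegral_tsum fun i => (measurable_one.indicator (hT i)).aemeasurable).symm
    _ ≤ ∫⁻ t, s.indicator (fun _ => N) t ∂ρ := lintegral_mono fun t => by
        by_cases ht : t ∈ s
        · rw [indicator_of_mem ht, hcount]
          exact hN t ht
        · simp [ht, fun i => notMem_subset (hTs i) ht]
    _ = N * ρ s := lintegral_indicator_const hs N

lemma IsImpurityLaw.measure_hole_radius_mem {μ : Measure ImpOmega} {p : ℝ} {π : TriV → ℝ}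
    {ρ : Measure ℝ} (hμ : IsImpurityLaw μ p π ρ) (u : TriV) {S : Set ℝ} (hS : MeasurableSet S) :
    μ {x | x.2.1 u = true ∧ x.2.2 u ∈ S} = ENNReal.ofReal (π u) * ρ S := by
  have := hμ.1
  have hrad : Measurable fun x : ImpOmega => x.2.2 u :=
    (measurable_pi_apply u).comp (measurable_snd.comp measurable_snd)
  have hlaw : (μ.restrict {x | x.2.1 u = true}).map (fun x => x.2.2 u) =
      ENNReal.ofReal (π u) • ρ := by
    refine Measure.ext_of_Iic _ _ fun b => ?_
    have hcyl := hμ.2.2 ∅ {u} {u} (fun _ => true) (fun _ => true) (fun _ => b)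
    simp only [Finset.notMem_empty, Finset.mem_singleton, forall_eq, Finset.prod_empty,
      Finset.prod_singleton, if_true, one_mul, IsEmpty.forall_iff] at hcyl
    rw [Measure.map_apply hrad measurableSet_Iic, Measure.restrict_apply (hrad measurableSet_Iic),
      Measure.smul_apply, smul_eq_mul, ← hcyl]
    congr 1; ext x; simp [and_comm]
  have hS' := congrArg (· S) hlaw
  simp only [Measure.map_apply hrad hS, Measure.restrict_apply (hrad hS), Measure.smul_apply,
    smul_eq_mul] at hS'
  rw [← hS']
  congr 1; ext x; simp [and_comm]

lemma measure_holeCrossAnnRestr_le {μ : Measure ImpOmega} {p : ℝ} {π : TriV → ℝ}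
    {ρ : Measure ℝ} (hμ : IsImpurityLaw μ p π ρ) (z : TriV) {n₁ n₂ : ℝ} (hn₁ : 1 ≤ n₁)
    (hn₁₂ : n₁ ≤ n₂ / 2) :
    μ {x | HoleCrossAnnRestr x z n₁ n₂} ≤
      ∑' u, ENNReal.ofReal (π u) * ρ (radiusWindow n₁ n₂ (boxDist u z)) :=
  calc μ {x | HoleCrossAnnRestr x z n₁ n₂}
      ≤ μ (⋃ u, {x | x.2.1 u = true ∧ x.2.2 u ∈ radiusWindow n₁ n₂ (boxDist u z)}) :=
        measure_mono fun _ ⟨u, h₁, h₂, h₃, h₄⟩ =>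
          mem_iUnion.2 ⟨u, radius_mem_radiusWindow hn₁ hn₁₂ h₁ h₂ h₃ h₄⟩
    _ ≤ _ := (measure_iUnion_le _).trans_eq
        (tsum_congr fun u => hμ.measure_hole_radius_mem u measurableSet_Icc)

lemma ImpurityAssumption.iSup_mul_measure_Ici_le {c γ : ℝ} {π : ℕ → TriV → ℝ}
    {ρ : ℕ → Measure ℝ} {υ : ℕ → ℝ} (h : ImpurityAssumption c γ π ρ υ) {m : ℕ} (hm : 1 ≤ m)
    [IsFiniteMeasure (ρ m)] {r : ℝ} (hr : 0 ≤ r) :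
    (⨆ v, ENNReal.ofReal (π m v)) * ρ m (Ici r) ≤
      ENNReal.ofReal (υ m / (m : ℝ) ^ 2 * (max r 1 / m) ^ (γ - 2) * Real.exp (-c * r / m)) := by
  rw [ENNReal.iSup_mul]
  refine iSup_le fun v => ?_
  rw [← ENNReal.ofReal_toReal (measure_ne_top (ρ m) (Ici r)),
    ← ENNReal.ofReal_mul' ENNReal.toReal_nonneg]
  exact ENNReal.ofReal_le_ofReal (h m hm r hr v)

lemma rpow_mul_exp_le {c γ n m : ℝ} (hc : 0 < c) (hγ : γ < 2) (hn : 0 < n) (hm : 1 ≤ m) :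
    (max (max (n / 4 - 1) 0) 1 / m) ^ (γ - 2) * Real.exp (-c * max (n / 4 - 1) 0 / m) ≤
      8 ^ (2 - γ) * Real.exp c * n ^ (γ - 2) * m ^ (2 - γ) * Real.exp (-(c / 4) * n / m) := by
  have hm₀ : 0 < m := by linarith
  have hbase : n / (8 * m) ≤ max (max (n / 4 - 1) 0) 1 / m := by
    rw [div_le_div_iff₀ (by positivity) hm₀]
    have : n / 8 ≤ max (max (n / 4 - 1) 0) 1 := by
      rcases le_total 8 n with h | h
      · exact le_max_of_le_left (le_max_of_le_left (by linarith))
      · exact le_max_of_le_right (by linarith)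
    nlinarith
  have hpow : (n / (8 * m)) ^ (γ - 2) = 8 ^ (2 - γ) * n ^ (γ - 2) * m ^ (2 - γ) := by
    rw [div_eq_mul_inv, Real.mul_rpow hn.le (by positivity), Real.inv_rpow (by positivity),
      ← Real.rpow_neg (by positivity), neg_sub, Real.mul_rpow (by norm_num) hm₀.le]
    ring
  have hexp : Real.exp (-c * max (n / 4 - 1) 0 / m) ≤
      Real.exp c * Real.exp (-(c / 4) * n / m) := by
    rw [← Real.exp_add, Real.exp_le_exp, div_le_iff₀ hm₀]
    have hr₀ : c * (n / 4 - 1) ≤ c * max (n / 4 - 1) 0 := by gcongr; exact le_max_left _ _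
    have hcancel : -(c / 4) * n / m * m = -(c / 4) * n := by field_simp
    nlinarith
  calc _ ≤ (n / (8 * m)) ^ (γ - 2) * (Real.exp c * Real.exp (-(c / 4) * n / m)) := by
        gcongr ?_ * ?_
        exact Real.rpow_le_rpow_of_nonpos (by positivity) hbase (by linarith)
    _ = _ := by rw [hpow]; ring

lemma ofReal_mul_ofReal_le_crossing_bound {c γ q n₁ n₂ m : ℝ} (hc : 0 < c) (hγ : γ < 2)
    (hn₁ : 0 ≤ n₁) (hn₂ : 0 < n₂) (hm : 1 ≤ m) :
    ENNReal.ofReal (544 * n₁ * n₂) * ENNReal.ofReal (q * (max (max (n₂ / 4 - 1) 0) 1 / m) ^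
        (γ - 2) * Real.exp (-c * max (n₂ / 4 - 1) 0 / m)) ≤
      ENNReal.ofReal (544 * 8 ^ (2 - γ) * Real.exp c * q * n₁ * n₂ ^ (γ - 1) * m ^ (2 - γ) *
        Real.exp (-(c / 4) * n₂ / m)) := by
  rw [← ENNReal.ofReal_mul (by positivity), ENNReal.ofReal_le_ofReal_iff']
  rcases le_total 0 q with hq | hq
  · left
    have hn₂pow : n₂ ^ (γ - 1) = n₂ * n₂ ^ (γ - 2) := by
      rw [show γ - 1 = 1 + (γ - 2) by ring, Real.rpow_add hn₂, Real.rpow_one]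
    calc _ = 544 * n₁ * n₂ * q * ((max (max (n₂ / 4 - 1) 0) 1 / m) ^ (γ - 2) *
          Real.exp (-c * max (n₂ / 4 - 1) 0 / m)) := by ring
      _ ≤ 544 * n₁ * n₂ * q * (8 ^ (2 - γ) * Real.exp c * n₂ ^ (γ - 2) * m ^ (2 - γ) *
          Real.exp (-(c / 4) * n₂ / m)) :=
          mul_le_mul_of_nonneg_left (rpow_mul_exp_le hc hγ hn₂ hm) (by positivity)
      _ = _ := by rw [hn₂pow]; ring
  · right
    exact mul_nonpos_of_nonneg_of_nonpos (by positivity)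
      (mul_nonpos_of_nonpos_of_nonneg (mul_nonpos_of_nonpos_of_nonneg hq (by positivity))
        (by positivity))

/-- **Lemma A.1 (restricted crossing holes).** Under the Assumption with constants
`c, γ`, there are `C, C' > 0` depending only on `c, γ` such that for all `m ≥ 1`
and all annuli `A_{n₁,n₂}(z)` with `1 ≤ n₁ ≤ n₂/2`, the probability that some hole
crosses the annulus without containing `B_{n₁}(z)` and without reaching the inner
boundary of `B_{2n₂}(z)` is at most `C (υ(m)/m²) n₁ n₂^{γ-1} m^{2-γ} e^{-C' n₂/m}`. -/
theorem restricted_crossing_hole_bound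
    (c γ : ℝ) (hc : 0 < c) (hγ : γ ∈ Set.Ioo (1:ℝ) 2) :
    ∃ C C' : ℝ, 0 < C ∧ 0 < C' ∧
      ∀ (π : ℕ → TriV → ℝ) (ρ : ℕ → Measure ℝ) (υ : ℕ → ℝ),
        ImpurityAssumption c γ π ρ υ →
        ∀ m : ℕ, 1 ≤ m →
        ∀ (p : ℝ) (μ : Measure ImpOmega), IsImpurityLaw μ p (π m) (ρ m) →
        ∀ (z : TriV) (n₁ n₂ : ℝ), 1 ≤ n₁ → n₁ ≤ n₂ / 2 →
          μ {x | HoleCrossAnnRestr x z n₁ n₂} ≤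
            ENNReal.ofReal (C * (υ m / (m : ℝ) ^ 2) * n₁ * n₂ ^ (γ - 1) *
              (m : ℝ) ^ (2 - γ) * Real.exp (-C' * n₂ / (m : ℝ))) := by
  refine ⟨544 * 8 ^ (2 - γ) * Real.exp c, c / 4, by positivity, by positivity, ?_⟩
  intro π ρ υ hυ m hm p μ hμ z n₁ n₂ hn₁ hn₁₂
  have := hμ.2.1
  calc μ {x | HoleCrossAnnRestr x z n₁ n₂}
      ≤ ∑' u, ENNReal.ofReal (π m u) * ρ m (radiusWindow n₁ n₂ (boxDist u z)) :=
        measure_holeCrossAnnRestr_le hμ z hn₁ hn₁₂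
    _ ≤ (⨆ v, ENNReal.ofReal (π m v)) * ∑' u, ρ m (radiusWindow n₁ n₂ (boxDist u z)) := by
        rw [← ENNReal.tsum_mul_left]
        exact ENNReal.tsum_le_tsum fun u => by
          gcongr; exact le_iSup (fun v => ENNReal.ofReal (π m v)) u
    _ ≤ (⨆ v, ENNReal.ofReal (π m v)) *
          (ENNReal.ofReal (544 * n₁ * n₂) * ρ m (Ici (max (n₂ / 4 - 1) 0))) := by
        gcongr
        exact tsum_measure_le_mul_of_encard_le _ (fun _ => measurableSet_Icc) measurableSet_Ici
          (fun _ => radiusWindow_subset_Ici hn₁₂ _)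
          fun t _ => encard_setOf_mem_radiusWindow_le z hn₁ hn₁₂ t
    _ = ENNReal.ofReal (544 * n₁ * n₂) *
          ((⨆ v, ENNReal.ofReal (π m v)) * ρ m (Ici (max (n₂ / 4 - 1) 0))) := by ring
    _ ≤ _ := by
        grw [hυ.iSup_mul_measure_Ici_le hm (le_max_right _ _)]
        exact ofReal_mul_ofReal_le_crossing_bound hc hγ.2 (by linarith) (by linarith)
          (by exact_mod_cast hm)

end
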